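/- In the setting of the previous statement (convergence group G on M, quasimetric ρ on the space of distinct triples T, and sets D_M(x,R) of boundary points reachable by sequences staying within ρ-distance R of x): if x, y ∈ T satisfy ρ(x,y) ≥ 2R + 2, then D_M(x,R) ∩ D_M(y,R) = ∅. -/

import Mathlib

open Set Pointwise

section AnnulusSystem

variable {M : Type*} [TopologicalSpace M]

/-- An annulus on `M`: an ordered pair of disjoint closed sets whose union does not cover `M`. -/
def IsAnnulus (A : Set M × Set M) : Prop :=
  IsClosed A.1 ∧ IsClosed A.2 ∧ Disjoint A.1 A.2 ∧ (A.1 ∪ A.2)ᶜ.Nonempty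

/-- The relation `A < B` between annuli: `int A⁺ ∪ int B⁻ = M`. -/
def AnnLt (A B : Set M × Set M) : Prop := interior A.2 ∪ interior B.1 = Set.univ

/-- There is a chain `K < A₁ < ⋯ < Aₙ < L` of annuli of `𝒜`. -/
def HasChain (𝒜 : Set (Set M × Set M)) (K L : Set M) (n : ℕ) : Prop :=
  ∃ c : Fin n → Set M × Set M, (∀ i, c i ∈ 𝒜) ∧
    (∀ i : Fin n, (i : ℕ) = 0 → K ⊆ interior (c i).1) ∧
    (∀ i j : Fin n, (i : ℕ) + 1 = (j : ℕ) → AnnLt (c i) (c j)) ∧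
    (∀ i : Fin n, (i : ℕ) + 1 = n → L ⊆ interior (c i).2)

/-- The chain length `(K|L) ∈ ℕ ∪ {∞}`. -/
noncomputable def chainLen (𝒜 : Set (Set M × Set M)) (K L : Set M) : ℕ∞ :=
  ⨆ (n : ℕ) (_ : HasChain 𝒜 K L n), (n : ℕ∞)

/-- The crossratio `(x,y|z,t) := ({x,y}|{z,t})`. -/
noncomputable def crossratio (𝒜 : Set (Set M × Set M)) (x y z t : M) : ℕ∞ :=
  chainLen 𝒜 {x, y} {z, t}

/-- The symmetric `G`-invariant annulus system generated by a single annulus `A`. -/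
def annSys (G : Type*) [Group G] [MulAction G M] (A : Set M × Set M) :
    Set (Set M × Set M) :=
  {B | ∃ g : G, B = (g • A.1, g • A.2) ∨ B = (g • A.2, g • A.1)}

end AnnulusSystem

open Filter in
/-- A group action on a topological space has the convergence property if every sequence of
distinct elements has a subsequence converging locally uniformly on the complement of a
(repelling) point `a` to a constant (attracting) point `b`. -/
def ConvergenceAction (G M : Type*) [Group G] [TopologicalSpace M] [MulAction G M] : Prop :=
  ∀ g : ℕ → G, Function.Injective g →
    ∃ φ : ℕ → ℕ, StrictMono φ ∧ ∃ a b : M,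
      ∀ K : Set M, IsCompact K → K ⊆ {a}ᶜ →
        ∀ U ∈ nhds b, ∀ᶠ n in atTop, (g (φ n)) • K ⊆ U

section Triples

open Filter

variable {M : Type*} [TopologicalSpace M]

/-- The space of distinct triples of `M`. -/
def Tri (M : Type*) : Type _ :=
  {x : M × M × M // x.1 ≠ x.2.1 ∧ x.2.1 ≠ x.2.2 ∧ x.1 ≠ x.2.2}

/-- The components of a triple. -/
def comp (x : Tri M) : Fin 3 → M := ![x.val.1, x.val.2.1, x.val.2.2]

/-- At least two of the three components of `x` lie in `U`. -/
def TwoIn (U : Set M) (x : Tri M) : Prop :=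
  ∃ i j : Fin 3, i ≠ j ∧ comp x i ∈ U ∧ comp x j ∈ U

/-- Convergence of a sequence of distinct triples to a boundary point `p ∈ M` in Tukia's
topology on `T ∪ M`: eventually at least two components lie in any open neighbourhood of `p`. -/
def TukiaTendsto (x : ℕ → Tri M) (p : M) : Prop :=
  ∀ U : Set M, IsOpen U → p ∈ U → ∀ᶠ n in atTop, TwoIn U (x n)

/-- The quasimetric on the space of distinct triples: the maximum of the crossratios of
pairs of components. -/
noncomputable def rhoT (𝒜 : Set (Set M × Set M)) (x y : Tri M) : ℕ∞ :=
  ⨆ (i : Fin 3) (j : Fin 3) (k : Fin 3) (l : Fin 3) (_ : i ≠ j) (_ : k ≠ l),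
    crossratio 𝒜 (comp x i) (comp x j) (comp y k) (comp y l)

/-- `D_M(x,R)`: the points of `M` reachable as Tukia limits of sequences of triples staying
within `ρ`-distance `R` of `x`. -/
def DM (𝒜 : Set (Set M × Set M)) (x : Tri M) (R : ℕ) : Set M :=
  {p | ∃ xs : ℕ → Tri M, (∀ n, rhoT 𝒜 x (xs n) ≤ (R : ℕ∞)) ∧ TukiaTendsto xs p}

/-- A finite boundary point: a point of `M` which is a Tukia limit of a sequence of triples
at bounded `ρ`-distance from some basepoint. -/
def FiniteBoundaryPoint (𝒜 : Set (Set M × Set M)) (p : M) : Prop :=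
  ∃ (x₀ : Tri M) (xs : ℕ → Tri M) (R : ℕ),
    (∀ n, rhoT 𝒜 x₀ (xs n) ≤ (R : ℕ∞)) ∧ TukiaTendsto xs p

end Triples

/-!
A point `p` in both `D_M(x,R)` and `D_M(y,R)` cuts every chain of annuli from a pair of components
of `x` to a pair of components of `y`. The chain has length at least `2R + 2`, and since
consecutive annuli `Aᵢ < Aᵢ₊₁` cover `M` by `int Aᵢ⁺ ∪ int Aᵢ₊₁⁻`, either the first `R + 1`
annuli form a chain from the `x`-pair to `p`, or the remaining ones, reversed, form a chain of
length at least `R + 1` from the `y`-pair to `p`. Both are impossible, since a Tukia limit `p` of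
triples within distance `R` of `x` satisfies `(xⁱ, xʲ | p) ≤ R`.
-/

section Chains

variable {M : Type*} [TopologicalSpace M] {𝒜 : Set (Set M × Set M)} {K L : Set M} {n : ℕ}

lemma le_chainLen (h : HasChain 𝒜 K L n) : (n : ℕ∞) ≤ chainLen 𝒜 K L :=
  le_iSup₂_of_le n h le_rfl

lemma exists_hasChain_of_lt_chainLen {m : ℕ∞} (h : m < chainLen 𝒜 K L) :
    ∃ n : ℕ, m < n ∧ HasChain 𝒜 K L n := by
  simpa only [chainLen, lt_iSup_iff, exists_prop, and_comm] using h

lemma HasChain.reverse (h𝒜 : ∀ B ∈ 𝒜, B.swap ∈ 𝒜) (h : HasChain 𝒜 K L n) :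
    HasChain 𝒜 L K n := by
  obtain ⟨c, hc𝒜, hK, hlt, hL⟩ := h
  refine ⟨fun t => (c t.rev).swap, fun t => h𝒜 _ (hc𝒜 _), fun t ht => ?_, fun a b hab => ?_,
    fun t ht => ?_⟩
  · exact hL t.rev (by rw [Fin.val_rev]; omega)
  · have hb := b.isLt
    rw [AnnLt, union_comm]
    exact hlt b.rev a.rev (by simp only [Fin.val_rev]; omega)
  · exact hK t.rev (by rw [Fin.val_rev]; omega)

lemma HasChain.split {m : ℕ} (h : HasChain 𝒜 K L (m + n)) (hm : 0 < m) (hn : 0 < n) (p : M) :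
    HasChain 𝒜 K {p} m ∨ HasChain 𝒜 {p} L n := by
  obtain ⟨c, hc𝒜, hK, hlt, hL⟩ := h
  have hcut := hlt ⟨m - 1, by omega⟩ ⟨m, by omega⟩ (by simp only; omega)
  rcases (eq_univ_iff_forall.1 hcut p) with hp | hp
  · refine .inl ⟨fun t => c (Fin.castAdd n t), fun t => hc𝒜 _, fun t ht => hK _ ht,
      fun a b hab => hlt _ _ hab, fun t ht => ?_⟩
    change {p} ⊆ interior (c (Fin.castAdd n t)).2
    rwa [show Fin.castAdd n t = ⟨m - 1, by omega⟩ from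
      Fin.ext (by simp only [Fin.val_castAdd]; omega), singleton_subset_iff]
  · refine .inr ⟨fun t => c (Fin.natAdd m t), fun t => hc𝒜 _, fun t ht => ?_,
      fun a b hab => hlt _ _ (by simp only [Fin.val_natAdd]; omega),
      fun t ht => hL _ (by simp only [Fin.val_natAdd]; omega)⟩
    change {p} ⊆ interior (c (Fin.natAdd m t)).1
    rwa [show Fin.natAdd m t = ⟨m, by omega⟩ from
      Fin.ext (by simp only [Fin.val_natAdd]; omega), singleton_subset_iff]

lemma HasChain.exists_isOpen_of_singleton {p : M} (h : HasChain 𝒜 K {p} n) :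
    ∃ U, IsOpen U ∧ p ∈ U ∧ ∀ L ⊆ U, HasChain 𝒜 K L n := by
  obtain ⟨c, hc𝒜, hK, hlt, hL⟩ := h
  rcases Nat.eq_zero_or_pos n with rfl | hn
  · exact ⟨univ, isOpen_univ, mem_univ p,
      fun L _ => ⟨c, hc𝒜, hK, hlt, fun t => t.elim0⟩⟩
  · have hlast := hL ⟨n - 1, by omega⟩ (by simp only; omega)
    refine ⟨_, isOpen_interior, singleton_subset_iff.1 hlast,
      fun L hLU => ⟨c, hc𝒜, hK, hlt, fun t ht => ?_⟩⟩
    rwa [show t = ⟨n - 1, by omega⟩ from Fin.ext (by simp only; omega)]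

end Chains

section Triples

variable {M : Type*} [TopologicalSpace M] {𝒜 : Set (Set M × Set M)}

lemma crossratio_le_rhoT (x y : Tri M) {i j k l : Fin 3} (hij : i ≠ j) (hkl : k ≠ l) :
    crossratio 𝒜 (comp x i) (comp x j) (comp y k) (comp y l) ≤ rhoT 𝒜 x y :=
  le_iSup_of_le i <| le_iSup_of_le j <| le_iSup_of_le k <| le_iSup_of_le l <|
    le_iSup₂_of_le hij hkl le_rfl

lemma exists_lt_crossratio_of_lt_rhoT {x y : Tri M} {m : ℕ∞} (h : m < rhoT 𝒜 x y) :
    ∃ i j k l : Fin 3, i ≠ j ∧ k ≠ l ∧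
      m < crossratio 𝒜 (comp x i) (comp x j) (comp y k) (comp y l) := by
  simpa only [rhoT, lt_iSup_iff, exists_prop] using h

lemma HasChain.le_of_mem_DM {x : Tri M} {R n : ℕ} {p : M} {i j : Fin 3} (hij : i ≠ j)
    (h : HasChain 𝒜 {comp x i, comp x j} {p} n) (hp : p ∈ DM 𝒜 x R) : n ≤ R := by
  obtain ⟨xs, hxs, hlim⟩ := hp
  obtain ⟨U, hU, hpU, hchain⟩ := h.exists_isOpen_of_singleton
  obtain ⟨m, k, l, hkl, hk, hl⟩ := (hlim U hU hpU).exists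
  have hchain' := hchain _ (insert_subset_iff.2 ⟨hk, singleton_subset_iff.2 hl⟩)
  exact_mod_cast calc (n : ℕ∞)
      _ ≤ crossratio 𝒜 (comp x i) (comp x j) (comp (xs m) k) (comp (xs m) l) :=
        le_chainLen hchain'
      _ ≤ rhoT 𝒜 x (xs m) := crossratio_le_rhoT x (xs m) hij hkl
      _ ≤ R := hxs m

end Triples

lemma swap_mem_annSys {G M : Type*} [Group G] [MulAction G M] {A B : Set M × Set M}
    (h : B ∈ annSys G A) : B.swap ∈ annSys G A := by
  obtain ⟨g, rfl | rfl⟩ := h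
  exacts [⟨g, .inr rfl⟩, ⟨g, .inl rfl⟩]

theorem DM_disjoint_of_far_general
    {G M : Type*} [Group G] [TopologicalSpace M] [MulAction G M]
    (A : Set M × Set M)
    (x y : Tri M) (R : ℕ)
    (hfar : ((2 * R + 2 : ℕ) : ℕ∞) ≤ rhoT (annSys G A) x y) :
    DM (annSys G A) x R ∩ DM (annSys G A) y R = ∅ := by
  refine eq_empty_iff_forall_notMem.2 fun p ⟨hpx, hpy⟩ => ?_
  have hlt : ((2 * R + 1 : ℕ) : ℕ∞) < rhoT (annSys G A) x y :=
    lt_of_lt_of_le (by norm_cast; omega) hfar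
  obtain ⟨i, j, k, l, hij, hkl, hcross⟩ := exists_lt_crossratio_of_lt_rhoT hlt
  obtain ⟨n, hn, hchain⟩ := exists_hasChain_of_lt_chainLen hcross
  norm_cast at hn
  obtain ⟨m, rfl⟩ : ∃ m, n = (R + 1) + m := ⟨n - (R + 1), by omega⟩
  rcases hchain.split (by omega) (by omega) p with hx | hy
  · have := hx.le_of_mem_DM hij hpx
    omega
  · have := (hy.reverse fun _ => swap_mem_annSys).le_of_mem_DM hkl hpy
    omega

theorem DM_disjoint_of_far
    {G M : Type*} [Group G] [Countable G] [TopologicalSpace M]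
    [CompactSpace M] [TopologicalSpace.MetrizableSpace M] [MulAction G M]
    (hcont : ∀ g : G, Continuous fun m : M => g • m)
    (hconv : ConvergenceAction G M)
    (A : Set M × Set M) (hA : IsAnnulus A)
    (x y : Tri M) (R : ℕ)
    (hfar : ((2 * R + 2 : ℕ) : ℕ∞) ≤ rhoT (annSys G A) x y) :
    DM (annSys G A) x R ∩ DM (annSys G A) y R = ∅ :=
  DM_disjoint_of_far_general A x y R hfar
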